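/- arXiv:1411.7208 — 2 statements merged into one kernel-verified Lean document; each statement's English description precedes it below -/
import Mathlib

section
/- Let m ≥ 13 and n ≥ 13 be integers with m ≢ 2 (mod 3) and n ≢ 2 (mod 3). Then γ_sR(Cₘ ∨ Cₙ) = 3. -/
open Finset SimpleGraph
open scoped Classical

/-- The sum of `f` over the closed neighborhood of `v` in `G`. -/
noncomputable def closedNbrSum {V : Type*} [Fintype V] (G : SimpleGraph V)
    (f : V → ℤ) (v : V) : ℤ :=
  ∑ u ∈ Finset.univ.filter (fun u => u = v ∨ G.Adj v u), f u

/-- `f` is a signed Roman dominating function on `G`. -/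
def IsSRDF {V : Type*} [Fintype V] (G : SimpleGraph V) (f : V → ℤ) : Prop :=
  (∀ v, f v = -1 ∨ f v = 1 ∨ f v = 2) ∧
  (∀ v, 1 ≤ closedNbrSum G f v) ∧
  (∀ v, f v = -1 → ∃ u, G.Adj v u ∧ f u = 2)

/-- The signed Roman domination number of `G`. -/
noncomputable def gammaSR {V : Type*} [Fintype V] (G : SimpleGraph V) : ℤ :=
  sInf {w : ℤ | ∃ f, IsSRDF G f ∧ w = ∑ v, f v}

/-- The join of two graphs. -/
def graphJoin {V W : Type*} (G : SimpleGraph V) (H : SimpleGraph W) :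
    SimpleGraph (V ⊕ W) where
  Adj x y :=
    match x, y with
    | .inl a, .inl b => G.Adj a b
    | .inr a, .inr b => H.Adj a b
    | _, _ => True
  symm := by
    constructor
    rintro (a | a) (b | b) h <;> simp_all <;> exact h.symm
  loopless := by
    constructor
    rintro (a | a) h <;> simp_all

/-!
A signed Roman dominating function `f` on `Cₘ ∨ Cₙ` with side weights `A`, `B` satisfies
`1 ≤ f[a-1] + f[a] + f[a+1] + B` at every vertex `a` of `Cₘ`; summing over the cycle gives
`m (1 - B) ≤ 3 A`, and symmetrically `n (1 - A) ≤ 3 B`. For `m, n ≥ 7` these force `A + B ≥ 3`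
unless `A = B = 1`. In that case the labelling of `Cₘ` has weight `1` and every window of three
consecutive labels sums to at least `0`; as the window sums add up to `3` while a label `1` would
force five consecutive windows to sum to at least `4`, all labels are `-1` or `2`, and weight `1`
forces `m ≡ 2 (mod 3)`.

Conversely, the labelling `2, -1, -1, 2, -1, -1, …` of a cycle has a `2` in every window; for
lengths `≢ 2 (mod 3)`, adjusting one or two labels gives weight `2` on `Cₘ` and weight `1` on `Cₙ`,
i.e. total weight `3`.
-/

open Fin.NatCast Fin.CommRing

theorem closedNbrSum_eq_add_sum_neighborFinset {V : Type*} [Fintype V] (G : SimpleGraph V)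
    [DecidableRel G.Adj] (f : V → ℤ) (v : V) :
    closedNbrSum G f v = f v + ∑ u ∈ G.neighborFinset v, f u := by
  rw [← sum_insert (show v ∉ G.neighborFinset v by simp), closedNbrSum]
  congr 1
  ext u
  simp

section Join

variable {V W : Type*} [Fintype V] [Fintype W] (G : SimpleGraph V) (H : SimpleGraph W)
  (f : V ⊕ W → ℤ)

theorem closedNbrSum_graphJoin_inl (a : V) :
    closedNbrSum (graphJoin G H) f (.inl a) = closedNbrSum G (f ∘ .inl) a + ∑ b, f (.inr b) := by
  simp only [closedNbrSum, sum_filter, Fintype.sum_sum_type]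
  congr 1 <;> simp [graphJoin]

theorem closedNbrSum_graphJoin_inr (b : W) :
    closedNbrSum (graphJoin G H) f (.inr b) = closedNbrSum H (f ∘ .inr) b + ∑ a, f (.inl a) := by
  simp only [closedNbrSum, sum_filter, Fintype.sum_sum_type]
  rw [add_comm]
  congr 1 <;> simp [graphJoin]

variable {G H}

theorem isSRDF_graphJoin_sumElim {g : V → ℤ} {h : W → ℤ}
    (hg : ∀ a, g a = -1 ∨ g a = 1 ∨ g a = 2) (hh : ∀ b, h b = -1 ∨ h b = 1 ∨ h b = 2)
    (hG : ∀ a, 1 ≤ closedNbrSum G g a + ∑ b, h b) (hH : ∀ b, 1 ≤ closedNbrSum H h b + ∑ a, g a)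
    {a₀ : V} (ha₀ : g a₀ = 2) {b₀ : W} (hb₀ : h b₀ = 2) :
    IsSRDF (graphJoin G H) (Sum.elim g h) := by
  refine ⟨?_, ?_, ?_⟩
  · rintro (a | b)
    exacts [hg a, hh b]
  · rintro (a | b)
    · simpa [closedNbrSum_graphJoin_inl] using hG a
    · simpa [closedNbrSum_graphJoin_inr] using hH b
  · rintro (a | b) -
    exacts [⟨.inr b₀, trivial, hb₀⟩, ⟨.inl a₀, trivial, ha₀⟩]

end Join

theorem card_mod_three_eq_two {ι : Type*} [Fintype ι] {g : ι → ℤ}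
    (hval : ∀ i, g i = -1 ∨ g i = 2) (hsum : ∑ i, g i = 1) : Fintype.card ι % 3 = 2 := by
  have hdvd : (3 : ℤ) ∣ ∑ i, (g i + 1) :=
    dvd_sum fun i _ => by rcases hval i with h | h <;> simp [h]
  rw [sum_add_distrib, hsum, sum_const, card_univ] at hdvd
  simp only [nsmul_eq_mul, mul_one] at hdvd
  omega

theorem sum_range_le_sum_of_nonneg {m : ℕ} [NeZero m] {M : Type*} [AddCommMonoid M]
    [PartialOrder M] [IsOrderedAddMonoid M] {w : Fin m → M} (hw : 0 ≤ w) (c : Fin m) {k : ℕ}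
    (hk : k ≤ m) : ∑ i ∈ range k, w (c + i) ≤ ∑ a, w a :=
  calc ∑ i ∈ range k, w (c + i)
      ≤ ∑ i ∈ range m, w (c + i) :=
        sum_le_sum_of_subset_of_nonneg (range_subset_range.mpr hk) fun _ _ _ => hw _
    _ = ∑ i : Fin m, w (c + i) := by simp [← Fin.sum_univ_eq_sum_range (fun i => w (c + i))]
    _ = ∑ a, w a := Fintype.sum_equiv (Equiv.addLeft c) _ _ fun _ => rfl

theorem val_sub_one_or_self_or_add_one_mod_three_eq_zero {m : ℕ} [NeZero m] (a : Fin m) :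
    (a - 1).val % 3 = 0 ∨ a.val % 3 = 0 ∨ (a + 1).val % 3 = 0 := by
  obtain ⟨k, rfl⟩ : ∃ k, m = k + 1 := ⟨m - 1, by have := NeZero.ne m; omega⟩
  rw [Fin.coe_sub_one, Fin.val_add_one]
  have := a.isLt
  split_ifs with h0 <;> simp only [Fin.ext_iff, Fin.val_zero] at h0 <;> omega

section Cycle

variable {m : ℕ} [NeZero m]

theorem closedNbrSum_cycleGraph (hm : 3 ≤ m) (g : Fin m → ℤ) (a : Fin m) :
    closedNbrSum (cycleGraph m) g a = g (a - 1) + g a + g (a + 1) := by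
  obtain ⟨k, rfl⟩ : ∃ k, m = k + 3 := ⟨m - 3, by omega⟩
  have hnbr : (cycleGraph (k + 3)).neighborFinset a = {a - 1, a + 1} := by
    ext u
    rw [mem_neighborFinset, ← mem_neighborSet, cycleGraph_neighborSet]
    simp
  have hne : a - 1 ≠ a + 1 := by
    have h := cycleGraph_degree_three_le (v := a)
    rwa [cycleGraph_degree_two_le, card_pair_eq_two_iff] at h
  rw [closedNbrSum_eq_add_sum_neighborFinset, hnbr, sum_pair hne]
  ring

theorem sum_closedNbrSum_cycleGraph (hm : 3 ≤ m) (g : Fin m → ℤ) :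
    ∑ a, closedNbrSum (cycleGraph m) g a = 3 * ∑ a, g a := by
  simp only [closedNbrSum_cycleGraph hm, sum_add_distrib,
    Fintype.sum_equiv (Equiv.subRight 1) (fun a => g (a - 1)) g (fun _ => rfl),
    Fintype.sum_equiv (Equiv.addRight 1) (fun a => g (a + 1)) g (fun _ => rfl)]
  ring

theorem card_mul_le_of_one_le_closedNbrSum_add (hm : 3 ≤ m) {g : Fin m → ℤ} {B : ℤ}
    (h : ∀ a, 1 ≤ closedNbrSum (cycleGraph m) g a + B) : m * (1 - B) ≤ 3 * ∑ a, g a := by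
  have := sum_le_sum fun a (_ : a ∈ univ) => h a
  rw [sum_add_distrib, sum_closedNbrSum_cycleGraph hm] at this
  simpa [mul_sub] using this

theorem sub_two_le_closedNbrSum_cycleGraph (hm : 3 ≤ m) {g : Fin m → ℤ} {c : ℤ}
    (hlow : ∀ a, -1 ≤ g a) (hmod : ∀ a : Fin m, a.val % 3 = 0 → c ≤ g a) (a : Fin m) :
    c - 2 ≤ closedNbrSum (cycleGraph m) g a := by
  rw [closedNbrSum_cycleGraph hm]
  have := hlow (a - 1); have := hlow a; have := hlow (a + 1)
  rcases val_sub_one_or_self_or_add_one_mod_three_eq_zero a with h | h | h <;> linarith [hmod _ h]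

/- Among the five windows centred at `j - 2, …, j + 2` (total at most `3`), each one meeting a
label `1` sums to at least `1`, and one containing exactly one `1` to at least `2`. -/
theorem ne_one_of_closedNbrSum_nonneg (hm : 5 ≤ m) {g : Fin m → ℤ}
    (hval : ∀ a, g a = -1 ∨ g a = 1 ∨ g a = 2)
    (hnonneg : ∀ a, 0 ≤ closedNbrSum (cycleGraph m) g a) (hsum : ∑ a, g a = 1) (j : Fin m) :
    g j ≠ 1 := by
  intro hj
  set x : ℕ → ℤ := fun k => g (j - 3 + k)
  have hwin : ∀ k : ℕ,
      closedNbrSum (cycleGraph m) g (j - 2 + k) = x k + x (k + 1) + x (k + 2) := by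
    intro k
    rw [closedNbrSum_cycleGraph (by omega)]
    simp only [x]
    push_cast
    ring_nf
  have h5 : ∑ k ∈ range 5, closedNbrSum (cycleGraph m) g (j - 2 + k) ≤ 3 :=
    calc _ ≤ ∑ a, closedNbrSum (cycleGraph m) g a := sum_range_le_sum_of_nonneg hnonneg _ hm
      _ = 3 := by rw [sum_closedNbrSum_cycleGraph (by omega), hsum, mul_one]
  have hx3 : x 3 = 1 := by simpa [x] using hj
  have hw : ∀ k, 0 ≤ x k + x (k + 1) + x (k + 2) := fun k => hwin k ▸ hnonneg _
  have hx : ∀ k, x k = -1 ∨ x k = 1 ∨ x k = 2 := fun k => hval _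
  simp only [sum_range_succ, sum_range_zero, hwin] at h5
  have := hw 0; have := hw 1; have := hw 2; have := hw 3; have := hw 4
  have := hx 0; have := hx 1; have := hx 2; have := hx 4; have := hx 5; have := hx 6
  simp only [Nat.reduceAdd] at *
  omega

theorem mod_three_eq_two_of_closedNbrSum_nonneg (hm : 5 ≤ m) {g : Fin m → ℤ}
    (hval : ∀ a, g a = -1 ∨ g a = 1 ∨ g a = 2)
    (hnonneg : ∀ a, 0 ≤ closedNbrSum (cycleGraph m) g a) (hsum : ∑ a, g a = 1) : m % 3 = 2 := by
  have hval' : ∀ a, g a = -1 ∨ g a = 2 := fun a =>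
    (hval a).imp_right (Or.resolve_left · (ne_one_of_closedNbrSum_nonneg hm hval hnonneg hsum a))
  simpa using card_mod_three_eq_two hval' hsum

end Cycle

def cycleLabelTwo (m i : ℕ) : ℤ := if i % 3 = 0 then 2 else if i = 1 ∧ m % 3 = 0 then 1 else -1

def cycleLabelOne (m i : ℕ) : ℤ := if i = 3 then 1 else cycleLabelTwo m i

theorem sum_range_cycleLabelTwo {m : ℕ} (hm : 2 ≤ m) (hm3 : m % 3 ≠ 2) :
    ∑ i ∈ range m, cycleLabelTwo m i = 2 := by
  have key : ∀ k, ∑ i ∈ range k, cycleLabelTwo m i =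
      3 * ((k + 2) / 3 : ℕ) - k + if 1 < k ∧ m % 3 = 0 then 2 else 0 := by
    intro k
    induction k with
    | zero => simp
    | succ k ih =>
      rw [sum_range_succ, ih]
      unfold cycleLabelTwo
      split_ifs <;> omega
  rw [key]
  split_ifs <;> omega

theorem sum_range_cycleLabelOne {m : ℕ} (hm : 4 ≤ m) (hm3 : m % 3 ≠ 2) :
    ∑ i ∈ range m, cycleLabelOne m i = 1 := by
  have h : ∀ i, cycleLabelOne m i = cycleLabelTwo m i - if i = 3 then 1 else 0 := by
    intro i
    unfold cycleLabelOne cycleLabelTwo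
    split_ifs <;> omega
  simp only [h, sum_sub_distrib, sum_ite_eq', mem_range, sum_range_cycleLabelTwo (by omega) hm3]
  rw [if_pos (by omega)]
  norm_num

theorem exists_isSRDF_graphJoin_cycleGraph {m n : ℕ} [NeZero m] [NeZero n] (hm : 3 ≤ m)
    (hn : 4 ≤ n) (hm3 : m % 3 ≠ 2) (hn3 : n % 3 ≠ 2) :
    ∃ f, IsSRDF (graphJoin (cycleGraph m) (cycleGraph n)) f ∧ ∑ v, f v = 3 := by
  set g : Fin m → ℤ := fun a => cycleLabelTwo m a
  set h : Fin n → ℤ := fun b => cycleLabelOne n b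
  have hg : ∑ a, g a = 2 := by
    rw [Fin.sum_univ_eq_sum_range (cycleLabelTwo m), sum_range_cycleLabelTwo (by omega) hm3]
  have hh : ∑ b, h b = 1 := by
    rw [Fin.sum_univ_eq_sum_range (cycleLabelOne n), sum_range_cycleLabelOne hn hn3]
  refine ⟨Sum.elim g h, isSRDF_graphJoin_sumElim ?_ ?_ ?_ ?_ (a₀ := 0) ?_ (b₀ := 0) ?_, ?_⟩
  · intro a; simp only [g, cycleLabelTwo]; split_ifs <;> simp
  · intro b; simp only [h, cycleLabelOne, cycleLabelTwo]; split_ifs <;> simp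
  · intro a
    have := sub_two_le_closedNbrSum_cycleGraph hm (c := 2) (g := g)
      (fun a => by simp only [g, cycleLabelTwo]; split_ifs <;> norm_num)
      (fun a ha => by simp [g, cycleLabelTwo, ha]) a
    linarith
  · intro b
    have := sub_two_le_closedNbrSum_cycleGraph (by omega) (c := 1) (g := h)
      (fun b => by simp only [h, cycleLabelOne, cycleLabelTwo]; split_ifs <;> norm_num)
      (fun b hb => by simp only [h, cycleLabelOne, cycleLabelTwo, hb]; split_ifs <;> norm_num) b
    linarith
  · simp [g, cycleLabelTwo]
  · simp [h, cycleLabelOne, cycleLabelTwo]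
  · rw [Fintype.sum_sum_type]
    simp only [Sum.elim_inl, Sum.elim_inr, hg, hh]
    norm_num

theorem three_le_or_eq_one_of_mul_le {m n A B : ℤ} (hm : 7 ≤ m) (hn : 7 ≤ n)
    (hA : m * (1 - B) ≤ 3 * A) (hB : n * (1 - A) ≤ 3 * B) : 3 ≤ A + B ∨ (A = 1 ∧ B = 1) := by
  rcases le_or_gt 3 (A + B) with h | h
  · exact Or.inl h
  right
  have hmA : (m - 3) * A ≤ m * (A + B - 1) := by nlinarith
  have hnB : (n - 3) * B ≤ n * (A + B - 1) := by nlinarith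
  rcases le_or_gt (A + B) 1 with hle | hgt
  · have hA1 : A ≤ A + B - 1 := by nlinarith
    have hB1 : B ≤ A + B - 1 := by nlinarith
    omega
  · have hA1 : A ≤ 1 := by nlinarith
    have hB1 : B ≤ 1 := by nlinarith
    omega

theorem three_le_sum_of_isSRDF_graphJoin_cycleGraph {m n : ℕ} [NeZero m] [NeZero n]
    (hm : 7 ≤ m) (hn : 7 ≤ n) (hm3 : m % 3 ≠ 2) {f : Fin m ⊕ Fin n → ℤ}
    (hf : IsSRDF (graphJoin (cycleGraph m) (cycleGraph n)) f) : 3 ≤ ∑ v, f v := by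
  obtain ⟨hval, hdom, -⟩ := hf
  have hdom_inl : ∀ a, 1 ≤ closedNbrSum (cycleGraph m) (f ∘ .inl) a + ∑ b, f (.inr b) :=
    fun a => closedNbrSum_graphJoin_inl _ _ f a ▸ hdom (.inl a)
  have hdom_inr : ∀ b, 1 ≤ closedNbrSum (cycleGraph n) (f ∘ .inr) b + ∑ a, f (.inl a) :=
    fun b => closedNbrSum_graphJoin_inr _ _ f b ▸ hdom (.inr b)
  rw [Fintype.sum_sum_type]
  rcases three_le_or_eq_one_of_mul_le (by exact_mod_cast hm) (by exact_mod_cast hn)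
    (card_mul_le_of_one_le_closedNbrSum_add (by omega) hdom_inl)
    (card_mul_le_of_one_le_closedNbrSum_add (by omega) hdom_inr) with h | ⟨hA, hB⟩
  · exact h
  · refine absurd (mod_three_eq_two_of_closedNbrSum_nonneg (g := f ∘ .inl) (by omega)
      (fun a => hval _) (fun a => ?_) hA) hm3
    linarith [hdom_inl a]

theorem stmt9 (m n : ℕ) (hm : 13 ≤ m) (hn : 13 ≤ n)
    (hm3 : m % 3 ≠ 2) (hn3 : n % 3 ≠ 2) :
    gammaSR (graphJoin (cycleGraph m) (cycleGraph n)) = 3 := by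
  have : NeZero m := ⟨by omega⟩
  have : NeZero n := ⟨by omega⟩
  obtain ⟨f, hf, hsum⟩ := exists_isSRDF_graphJoin_cycleGraph (by omega) (by omega) hm3 hn3
  refine IsLeast.csInf_eq ⟨⟨f, hf, hsum.symm⟩, ?_⟩
  rintro w ⟨f, hf, rfl⟩
  exact three_le_sum_of_isSRDF_graphJoin_cycleGraph (by omega) (by omega) hm3 hf
end

section
/- The signed Roman domination number of the fan Fₙ = K₁ ∨ Pₙ equals 2 when n ∈ {2,4}, and equals 1 for every integer n ≥ 1 with n ∉ {2,4}. -/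
/-
The apex of the fan is adjacent to every vertex, so its closed-neighbourhood condition says the
weight is at least 1. Labelling the apex 2 reduces everything else to closed-neighbourhood sums
at least -1 on the path: the alternating labelling -1, 1, -1, … has weight 1 for odd n and 2 for
even n, and for even n ≥ 6 the labelling -1, 2, -1, -1, 1, -1, 1, …, -1 has weight 1.
For n = 2, 4 weight 1 is impossible because two labels from {-1, 1, 2} never sum to -1: the
conditions at the ends of the path then force the weight up to 2 unless no label is 2, and
without a label 2 there is no label -1 either.
-/

open Finset SimpleGraph
open scoped Classical

local notation "fan " n:max => graphJoin (⊥ : SimpleGraph (Fin 1)) (pathGraph n)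

theorem closedNbrSum_eq_sum_of_forall_adj {V : Type*} [Fintype V] {G : SimpleGraph V}
    (f : V → ℤ) {v : V} (hv : ∀ u, u ≠ v → G.Adj v u) :
    closedNbrSum G f v = ∑ u, f u := by
  rw [closedNbrSum, Finset.filter_true_of_mem fun u _ => (em (u = v)).imp_right (hv u)]

theorem closedNbrSum_graphJoin_inr_s12 {V W : Type*} [Fintype V] [Fintype W]
    (G : SimpleGraph V) (H : SimpleGraph W) (f : V ⊕ W → ℤ) (w : W) :
    closedNbrSum (graphJoin G H) f (Sum.inr w) =
      ∑ v, f (Sum.inl v) + closedNbrSum H (f ∘ Sum.inr) w := by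
  rw [closedNbrSum, closedNbrSum, Finset.sum_filter, Finset.sum_filter, Fintype.sum_sum_type]
  simp [graphJoin]

theorem closedNbrSum_pathGraph {n : ℕ} (g : ℕ → ℤ) (i : Fin n) :
    closedNbrSum (pathGraph n) (fun j => g j) i =
      (if 0 < (i : ℕ) then g (i - 1) else 0) + g i +
        (if (i : ℕ) + 1 < n then g (i + 1) else 0) := by
  have hsplit : ∀ k : ℕ, (if k = i ∨ i + 1 = k ∨ k + 1 = i then g k else 0) =
      (if k = i - 1 ∧ 0 < (i : ℕ) then g k else 0) + (if k = i then g k else 0) +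
        (if k = i + 1 then g k else 0) := by
    intro k
    split_ifs <;> omega
  rw [closedNbrSum, Finset.sum_filter]
  simp only [pathGraph_adj, Fin.ext_iff]
  rw [Fin.sum_univ_eq_sum_range (fun k => if k = i ∨ i + 1 = k ∨ k + 1 = i then g k else 0)]
  simp only [hsplit, Finset.sum_add_distrib, ite_and, Finset.sum_ite_eq', Finset.mem_range]
  rw [if_pos (by omega), if_pos i.isLt]

namespace IsSRDF

variable {V : Type*} [Fintype V] {G : SimpleGraph V} {f : V → ℤ}

theorem one_le_sum_of_forall_adj (hf : IsSRDF G f) {v : V} (hv : ∀ u, u ≠ v → G.Adj v u) :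
    1 ≤ ∑ u, f u :=
  closedNbrSum_eq_sum_of_forall_adj f hv ▸ hf.2.1 v

theorem exists_eq_two_or_sum_eq_card (hf : IsSRDF G f) :
    (∃ v, f v = 2) ∨ ∑ v, f v = Fintype.card V := by
  refine or_iff_not_imp_left.2 fun hno2 => ?_
  simp only [not_exists] at hno2
  have hone : ∀ v, f v = 1 := fun v => by
    have hneg : f v ≠ -1 := fun hv => by
      obtain ⟨u, -, hu⟩ := hf.2.2 v hv
      exact hno2 u hu
    have := hf.1 v
    have := hno2 v
    omega
  simp [hone]

end IsSRDF

theorem gammaSR_eq_of_isSRDF {V : Type*} [Fintype V] {G : SimpleGraph V} {f : V → ℤ}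
    (hf : IsSRDF G f) {k : ℤ} (hk : ∑ v, f v = k)
    (hmin : ∀ g, IsSRDF G g → k ≤ ∑ v, g v) : gammaSR G = k :=
  IsLeast.csInf_eq ⟨⟨f, hf, hk.symm⟩, by rintro _ ⟨g, hg, rfl⟩; exact hmin g hg⟩

theorem cone_adj_apex {W : Type*} (H : SimpleGraph W) (u : Fin 1 ⊕ W) (hu : u ≠ Sum.inl 0) :
    (graphJoin (⊥ : SimpleGraph (Fin 1)) H).Adj (Sum.inl 0) u := by
  rcases u with a | w
  · exact absurd (congrArg Sum.inl (Subsingleton.elim a 0)) hu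
  · trivial

theorem one_le_sum_of_isSRDF_cone {W : Type*} [Fintype W] {H : SimpleGraph W}
    {f : Fin 1 ⊕ W → ℤ} (hf : IsSRDF (graphJoin (⊥ : SimpleGraph (Fin 1)) H) f) :
    1 ≤ ∑ v, f v :=
  hf.one_le_sum_of_forall_adj (cone_adj_apex H)

theorem sum_cone {W : Type*} [Fintype W] (g : W → ℤ) :
    ∑ v, Sum.elim (fun _ : Fin 1 => (2 : ℤ)) g v = 2 + ∑ w, g w := by
  simp [Fintype.sum_sum_type]

theorem isSRDF_cone {W : Type*} [Fintype W] {H : SimpleGraph W} {g : W → ℤ}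
    (hval : ∀ w, g w = -1 ∨ g w = 1 ∨ g w = 2) (hnbr : ∀ w, -1 ≤ closedNbrSum H g w)
    (hsum : -1 ≤ ∑ w, g w) :
    IsSRDF (graphJoin (⊥ : SimpleGraph (Fin 1)) H) (Sum.elim (fun _ : Fin 1 => (2 : ℤ)) g) := by
  refine ⟨?_, ?_, ?_⟩
  · rintro (_ | w)
    · simp
    · exact hval w
  · rintro (a | w)
    · obtain rfl := Subsingleton.elim a 0
      rw [closedNbrSum_eq_sum_of_forall_adj _ (cone_adj_apex H), sum_cone]
      omega
    · rw [closedNbrSum_graphJoin_inr_s12]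
      simp only [Sum.elim_inl, Finset.sum_const, Finset.card_univ, Fintype.card_fin, one_smul,
        Sum.elim_comp_inr]
      linarith [hnbr w]
  · rintro (_ | w) hw
    · simp at hw
    · exact ⟨Sum.inl 0, trivial, rfl⟩

def altLabel (k : ℕ) : ℤ := if k % 2 = 0 then -1 else 1

def evenFanLabel (k : ℕ) : ℤ := if k = 1 then 2 else if k ≤ 2 ∨ k % 2 = 1 then -1 else 1

theorem altLabel_mem (k : ℕ) : altLabel k = -1 ∨ altLabel k = 1 ∨ altLabel k = 2 := by
  unfold altLabel
  split_ifs <;> simp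

theorem evenFanLabel_mem (k : ℕ) :
    evenFanLabel k = -1 ∨ evenFanLabel k = 1 ∨ evenFanLabel k = 2 := by
  unfold evenFanLabel
  split_ifs <;> simp

theorem sum_range_altLabel (n : ℕ) :
    ∑ k ∈ Finset.range n, altLabel k = if n % 2 = 0 then 0 else -1 := by
  induction n with
  | zero => simp
  | succ n ih =>
    rw [Finset.sum_range_succ, ih, altLabel]
    split_ifs <;> omega

theorem sum_range_evenFanLabel {n : ℕ} (hn : 3 ≤ n) :
    ∑ k ∈ Finset.range n, evenFanLabel k = if n % 2 = 0 then -1 else 0 := by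
  induction n, hn using Nat.le_induction with
  | base => simp [Finset.sum_range_succ, evenFanLabel]
  | succ n hn ih =>
    rw [Finset.sum_range_succ, ih, evenFanLabel]
    split_ifs <;> omega

theorem neg_one_le_closedNbrSum_altLabel {n : ℕ} (i : Fin n) :
    -1 ≤ closedNbrSum (pathGraph n) (fun j => altLabel j) i := by
  rw [closedNbrSum_pathGraph]
  simp only [altLabel]
  split_ifs <;> omega

theorem neg_one_le_closedNbrSum_evenFanLabel {n : ℕ} (hn : n ≠ 4) (i : Fin n) :
    -1 ≤ closedNbrSum (pathGraph n) (fun j => evenFanLabel j) i := by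
  have := i.isLt
  rw [closedNbrSum_pathGraph]
  simp only [evenFanLabel]
  split_ifs <;> omega

theorem isSRDF_fan_altLabel (n : ℕ) :
    IsSRDF (fan n) (Sum.elim (fun _ : Fin 1 => (2 : ℤ)) fun j : Fin n => altLabel j) := by
  refine isSRDF_cone (fun j => altLabel_mem j) neg_one_le_closedNbrSum_altLabel ?_
  rw [Fin.sum_univ_eq_sum_range (fun k => altLabel k), sum_range_altLabel]
  split_ifs <;> simp

theorem sum_fan_altLabel (n : ℕ) :
    ∑ v, Sum.elim (fun _ : Fin 1 => (2 : ℤ)) (fun j : Fin n => altLabel j) v =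
      if n % 2 = 0 then 2 else 1 := by
  rw [sum_cone, Fin.sum_univ_eq_sum_range (fun k => altLabel k), sum_range_altLabel]
  split_ifs <;> rfl

theorem isSRDF_fan_evenFanLabel {n : ℕ} (hn : 5 ≤ n) :
    IsSRDF (fan n) (Sum.elim (fun _ : Fin 1 => (2 : ℤ)) fun j : Fin n => evenFanLabel j) := by
  refine isSRDF_cone (fun j => evenFanLabel_mem j)
    (neg_one_le_closedNbrSum_evenFanLabel (by omega)) ?_
  rw [Fin.sum_univ_eq_sum_range (fun k => evenFanLabel k), sum_range_evenFanLabel (by omega)]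
  split_ifs <;> simp

theorem sum_fan_evenFanLabel {n : ℕ} (hn : 3 ≤ n) :
    ∑ v, Sum.elim (fun _ : Fin 1 => (2 : ℤ)) (fun j : Fin n => evenFanLabel j) v =
      if n % 2 = 0 then 1 else 2 := by
  rw [sum_cone, Fin.sum_univ_eq_sum_range (fun k => evenFanLabel k), sum_range_evenFanLabel hn]
  split_ifs <;> rfl

theorem two_le_sum_of_isSRDF_fan_two {f : Fin 1 ⊕ Fin 2 → ℤ}
    (hf : IsSRDF (fan 2) f) : 2 ≤ ∑ v, f v := by
  have hsum : ∑ v, f v = f (Sum.inl 0) + (f (Sum.inr 0) + f (Sum.inr 1)) := by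
    simp [Fintype.sum_sum_type, Fin.sum_univ_two]
  have hone := one_le_sum_of_isSRDF_cone hf
  have htwo : f (Sum.inl 0) = 2 ∨ f (Sum.inr 0) = 2 ∨ f (Sum.inr 1) = 2 ∨ ∑ v, f v = 3 := by
    simpa [Fin.exists_fin_two, or_assoc] using hf.exists_eq_two_or_sum_eq_card
  have := hf.1 (Sum.inl 0); have := hf.1 (Sum.inr 0); have := hf.1 (Sum.inr 1)
  omega

theorem two_le_sum_of_isSRDF_fan_four {f : Fin 1 ⊕ Fin 4 → ℤ}
    (hf : IsSRDF (fan 4) f) : 2 ≤ ∑ v, f v := by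
  have hsum : ∑ v, f v =
      f (Sum.inl 0) + (f (Sum.inr 0) + f (Sum.inr 1) + f (Sum.inr 2) + f (Sum.inr 3)) := by
    simp [Fintype.sum_sum_type, Fin.sum_univ_four]
  have hone := one_le_sum_of_isSRDF_cone hf
  have htwo : f (Sum.inl 0) = 2 ∨ f (Sum.inr 0) = 2 ∨ f (Sum.inr 1) = 2 ∨
      f (Sum.inr 2) = 2 ∨ f (Sum.inr 3) = 2 ∨ ∑ v, f v = 5 := by
    simpa [Fin.exists_fin_succ, or_assoc] using hf.exists_eq_two_or_sum_eq_card
  have hfirst : 1 ≤ f (Sum.inl 0) + (f (Sum.inr 0) + f (Sum.inr 1)) := by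
    have h := hf.2.1 (Sum.inr 0)
    rw [closedNbrSum_graphJoin_inr_s12] at h
    simpa [closedNbrSum, Finset.sum_filter, Fin.sum_univ_four, pathGraph_adj] using h
  have hlast : 1 ≤ f (Sum.inl 0) + (f (Sum.inr 2) + f (Sum.inr 3)) := by
    have h := hf.2.1 (Sum.inr 3)
    rw [closedNbrSum_graphJoin_inr_s12] at h
    simpa [closedNbrSum, Finset.sum_filter, Fin.sum_univ_four, pathGraph_adj] using h
  have := hf.1 (Sum.inl 0); have := hf.1 (Sum.inr 0); have := hf.1 (Sum.inr 1)
  have := hf.1 (Sum.inr 2); have := hf.1 (Sum.inr 3)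
  omega

theorem stmt12 (n : ℕ) (hn : 1 ≤ n) :
    gammaSR (graphJoin (⊥ : SimpleGraph (Fin 1)) (pathGraph n)) =
      if n = 2 ∨ n = 4 then 2 else 1 := by
  split_ifs with h
  · rcases h with rfl | rfl
    · exact gammaSR_eq_of_isSRDF (isSRDF_fan_altLabel 2) (sum_fan_altLabel 2)
        fun _ => two_le_sum_of_isSRDF_fan_two
    · exact gammaSR_eq_of_isSRDF (isSRDF_fan_altLabel 4) (sum_fan_altLabel 4)
        fun _ => two_le_sum_of_isSRDF_fan_four
  · rcases Nat.mod_two_eq_zero_or_one n with he | ho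
    · refine gammaSR_eq_of_isSRDF (isSRDF_fan_evenFanLabel (by omega)) ?_
        fun _ => one_le_sum_of_isSRDF_cone
      rw [sum_fan_evenFanLabel (by omega), if_pos he]
    · refine gammaSR_eq_of_isSRDF (isSRDF_fan_altLabel n) ?_
        fun _ => one_le_sum_of_isSRDF_cone
      rw [sum_fan_altLabel, if_neg (by omega)]
end
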